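/- arXiv:2510.20581 — 2 statements merged into one kernel-verified Lean document; each statement's English description precedes it below -/
import Mathlib

section
/- For all a, b, j, k ∈ {0, 1, …, N−1}, the displacement operators are trace-orthogonal: tr(D_{a,b}† · D_{j,k}) = N if a = j and b = k, and tr(D_{a,b}† · D_{j,k}) = 0 otherwise. -/
open Matrix Complex

noncomputable section

/-- `ω = exp(2πi/N)`. -/
def omegaN (N : ℕ) : ℂ := Complex.exp (2 * Real.pi * Complex.I / N)

/-- The shift matrix `X` with entries `X j k = 1` iff `j ≡ k+1 (mod N)`. -/
def shiftX (N : ℕ) : Matrix (Fin N) (Fin N) ℂ :=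
  Matrix.of fun j k => if (j : ℕ) = ((k : ℕ) + 1) % N then 1 else 0

/-- The clock matrix `Z = diag(ω^j)`. -/
def clockZ (N : ℕ) : Matrix (Fin N) (Fin N) ℂ :=
  Matrix.diagonal fun j => omegaN N ^ (j : ℕ)


/-- The displacement operator `D_{j,k} = exp(-πi jk/N) • Z^j * X^k` for integers `j k`. -/
def dispD (N : ℕ) (j k : ℤ) : Matrix (Fin N) (Fin N) ℂ :=
  Complex.exp (-(Real.pi * Complex.I * j * k) / N) • (clockZ N ^ j * shiftX N ^ k)

lemma shiftX_pow (N : ℕ) (hN : 0 < N) (b : ℕ) :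
    shiftX N ^ b = Matrix.of (fun (m i : Fin N) => if (m : ℕ) = ((i : ℕ) + b) % N then (1:ℂ) else 0) := by
  induction b with
  | zero =>
      ext m i
      simp [Matrix.one_apply, Nat.mod_eq_of_lt i.isLt, Fin.ext_iff]
  | succ b ih =>
      rw [pow_succ, ih]
      ext m i
      set t0 : Fin N := ⟨((i : ℕ) + 1) % N, Nat.mod_lt _ hN⟩ with ht0
      have hcond : ∀ t : Fin N, ((t : ℕ) = ((i : ℕ) + 1) % N) ↔ t = t0 := by
        intro t; rw [Fin.ext_iff]
      simp only [Matrix.mul_apply, Matrix.of_apply, shiftX, hcond, mul_ite, mul_one, mul_zero]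
      rw [Finset.sum_ite_eq' Finset.univ t0]
      simp only [Finset.mem_univ, if_true, ht0]
      have : (((i : ℕ) + 1) % N + b) % N = ((i : ℕ) + (b + 1)) % N := by
        rw [Nat.mod_add_mod]; ring_nf
      rw [this]

lemma omegaN_ne_zero (N : ℕ) : omegaN N ≠ 0 := Complex.exp_ne_zero _

lemma omegaN_pow_N (N : ℕ) (hN : 0 < N) : omegaN N ^ N = 1 := by
  rw [omegaN, ← Complex.exp_nat_mul]
  have hNc : (N : ℂ) ≠ 0 := Nat.cast_ne_zero.2 hN.ne'
  have : (N : ℂ) * (2 * Real.pi * Complex.I / N) = 2 * Real.pi * Complex.I := by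
    field_simp
  rw [this, Complex.exp_two_pi_mul_I]

lemma omegaN_conj (N : ℕ) : (starRingEnd ℂ) (omegaN N) = (omegaN N)⁻¹ := by
  rw [omegaN, ← Complex.exp_conj, ← Complex.exp_neg]
  congr 1
  simp only [map_div₀, map_neg, _root_.map_mul, Complex.conj_I, Complex.conj_ofReal,
    map_natCast, map_ofNat]
  ring

lemma dispD_apply (N : ℕ) (hN : 0 < N) (p q : Fin N) (m i : Fin N) :
    dispD N ((p : ℕ) : ℤ) ((q : ℕ) : ℤ) m i
      = Complex.exp (-(Real.pi * Complex.I * (p : ℕ) * (q : ℕ)) / N)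
        * (omegaN N ^ ((m : ℕ) * (p : ℕ))
          * (if (m : ℕ) = ((i : ℕ) + (q : ℕ)) % N then 1 else 0)) := by
  rw [dispD, zpow_natCast, zpow_natCast, shiftX_pow N hN, clockZ, Matrix.diagonal_pow]
  simp [Matrix.smul_apply, Matrix.diagonal_mul, pow_mul]

/-- Trace orthogonality of displacement operators for indices in {0,…,N−1}:
`tr(D_{a,b}† D_{j,k}) = N` if `(a,b) = (j,k)`, and `0` otherwise. -/
theorem dispD_trace_orthogonal (N : ℕ) (hN : 0 < N) (a b j k : Fin N) :
    Matrix.trace ((dispD N ((a : ℕ) : ℤ) ((b : ℕ) : ℤ))ᴴ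
        * dispD N ((j : ℕ) : ℤ) ((k : ℕ) : ℤ))
      = if a = j ∧ b = k then (N : ℂ) else 0 := by
  have hNc : (N : ℂ) ≠ 0 := Nat.cast_ne_zero.2 hN.ne'
  have hω0 : omegaN N ≠ 0 := omegaN_ne_zero N
  have hωN : omegaN N ^ N = 1 := omegaN_pow_N N hN
  have hconj : (starRingEnd ℂ) (omegaN N) = (omegaN N)⁻¹ := omegaN_conj N
  have htr : Matrix.trace ((dispD N ((a : ℕ) : ℤ) ((b : ℕ) : ℤ))ᴴ
        * dispD N ((j : ℕ) : ℤ) ((k : ℕ) : ℤ))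
      = ∑ i : Fin N, ∑ m : Fin N,
          (starRingEnd ℂ) (dispD N ((a : ℕ) : ℤ) ((b : ℕ) : ℤ) m i)
            * dispD N ((j : ℕ) : ℤ) ((k : ℕ) : ℤ) m i := by
    simp [Matrix.trace, Matrix.diag, Matrix.mul_apply, Matrix.conjTranspose_apply]
  rw [htr]
  by_cases hbk : b = k
  · subst hbk
    -- reduce inner sum
    set c1 : ℂ := Complex.exp (-(Real.pi * Complex.I * (a : ℕ) * (b : ℕ)) / N) with hc1
    set c2 : ℂ := Complex.exp (-(Real.pi * Complex.I * (j : ℕ) * (b : ℕ)) / N) with hc2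
    set ζ : ℂ := (omegaN N)⁻¹ ^ (a : ℕ) * omegaN N ^ (j : ℕ) with hζ
    have hζN : ζ ^ N = 1 := by
      rw [hζ, mul_pow, ← pow_mul, ← pow_mul, mul_comm (a:ℕ) N, mul_comm (j:ℕ) N,
        pow_mul, pow_mul, inv_pow, hωN, inv_one, one_pow, one_pow, one_mul]
    have hterm : ∀ i m : Fin N,
        (starRingEnd ℂ) (dispD N ((a : ℕ) : ℤ) ((b : ℕ) : ℤ) m i)
            * dispD N ((j : ℕ) : ℤ) ((b : ℕ) : ℤ) m i
        = if (m : ℕ) = ((i : ℕ) + (b : ℕ)) % N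
            then (starRingEnd ℂ) c1 * c2 * ζ ^ (m : ℕ) else 0 := by
      intro i m
      rw [dispD_apply N hN, dispD_apply N hN]
      by_cases h1 : (m : ℕ) = ((i : ℕ) + (b : ℕ)) % N
      · rw [if_pos h1, if_pos h1, mul_one, mul_one]
        rw [_root_.map_mul, _root_.map_pow, hconj]
        rw [hζ, mul_pow, ← pow_mul, ← pow_mul, mul_comm (a:ℕ) (m:ℕ), mul_comm (j:ℕ) (m:ℕ)]
        ring
      · simp [h1]
    have hsum : ∀ i : Fin N,
        (∑ m : Fin N,
          (starRingEnd ℂ) (dispD N ((a : ℕ) : ℤ) ((b : ℕ) : ℤ) m i)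
            * dispD N ((j : ℕ) : ℤ) ((b : ℕ) : ℤ) m i)
        = (starRingEnd ℂ) c1 * c2 * ζ ^ ((b : ℕ)) * ζ ^ ((i : ℕ)) := by
      intro i
      simp only [hterm]
      set m0 : Fin N := ⟨((i : ℕ) + (b : ℕ)) % N, Nat.mod_lt _ hN⟩ with hm0
      have hcond : ∀ m : Fin N, ((m : ℕ) = ((i : ℕ) + (b : ℕ)) % N) ↔ m = m0 := by
        intro m; rw [Fin.ext_iff]
      simp only [hcond]
      rw [Finset.sum_ite_eq' Finset.univ m0]
      simp only [Finset.mem_univ, if_true, hm0]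
      have hmod : ζ ^ (((i : ℕ) + (b : ℕ)) % N) = ζ ^ ((i : ℕ) + (b : ℕ)) := by
        conv_rhs => rw [← Nat.div_add_mod ((i : ℕ) + (b : ℕ)) N, pow_add, pow_mul, hζN,
          one_pow, one_mul]
      rw [hmod, pow_add]
      ring
    simp only [hsum]
    rw [← Finset.mul_sum, Fin.sum_univ_eq_sum_range (fun s => ζ ^ s)]
    by_cases haj : a = j
    · subst haj
      have hζ1 : ζ = 1 := by
        rw [hζ, inv_pow, inv_mul_cancel₀ (pow_ne_zero _ hω0)]
      have hC : (starRingEnd ℂ) c1 * c2 = 1 := by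
        rw [hc1, hc2, ← Complex.exp_conj, ← Complex.exp_add]
        rw [show (starRingEnd ℂ) (-(Real.pi * Complex.I * (a : ℕ) * (b : ℕ)) / N)
              + (-(Real.pi * Complex.I * (a : ℕ) * (b : ℕ)) / N) = 0 from ?_,
          Complex.exp_zero]
        simp [map_div₀]
        ring
      simp [hζ1, hC]
    · have hζne : ζ ≠ 1 := by
        intro h
        apply haj
        have hz : ζ = omegaN N ^ (((j : ℕ) : ℤ) - ((a : ℕ) : ℤ)) := by
          rw [hζ, zpow_sub₀ hω0, zpow_natCast, zpow_natCast, inv_pow, div_eq_mul_inv]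
          ring
        rw [hz] at h
        have hdvd : ((N : ℤ)) ∣ (((j : ℕ) : ℤ) - ((a : ℕ) : ℤ)) :=
          ((Complex.isPrimitiveRoot_exp N hN.ne').zpow_eq_one_iff_dvd _).1 h
        have hj : ((j : ℕ) : ℤ) < N := by exact_mod_cast j.isLt
        have ha : ((a : ℕ) : ℤ) < N := by exact_mod_cast a.isLt
        have h0 : (((j : ℕ) : ℤ) - ((a : ℕ) : ℤ)) = 0 := by
          refine Int.eq_zero_of_dvd_of_natAbs_lt_natAbs hdvd ?_
          rw [Int.natAbs_natCast]
          omega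
        have : (j : ℕ) = (a : ℕ) := by omega
        exact (Fin.ext this).symm
      rw [geom_sum_eq hζne, hζN, sub_self, zero_div, mul_zero]
      have : ¬ (a = j ∧ b = b) := fun h => haj h.1
      simp [this, haj]
  · have hterm : ∀ i m : Fin N,
        (starRingEnd ℂ) (dispD N ((a : ℕ) : ℤ) ((b : ℕ) : ℤ) m i)
            * dispD N ((j : ℕ) : ℤ) ((k : ℕ) : ℤ) m i = 0 := by
      intro i m
      rw [dispD_apply N hN, dispD_apply N hN]
      by_cases h1 : (m : ℕ) = ((i : ℕ) + (b : ℕ)) % N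
      · by_cases h2 : (m : ℕ) = ((i : ℕ) + (k : ℕ)) % N
        · exfalso
          apply hbk
          have hmod : ((i : ℕ) + (b : ℕ)) % N = ((i : ℕ) + (k : ℕ)) % N := by
            rw [← h1, h2]
          have h3 : (b : ℕ) ≡ (k : ℕ) [MOD N] :=
            Nat.ModEq.add_left_cancel' (i : ℕ) hmod
          have : (b : ℕ) % N = (k : ℕ) % N := h3
          rw [Nat.mod_eq_of_lt b.isLt, Nat.mod_eq_of_lt k.isLt] at this
          exact Fin.ext this
        · simp [h2]
      · simp [h1]
    simp only [hterm]
    have : ¬ (a = j ∧ b = k) := fun h => hbk h.2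
    simp [this]
end
end

section
/- For any N×N complex matrix W and any positive integer k, the k-frame potential of the conjugation family {D_{a,b} W D_{a,b}† : a,b ∈ {0,…,N−1}} reduces to a Fourier-type sum over coefficient magnitudes: (1/N⁴) Σ_{a,b,c,d=0}^{N−1} |tr( D_{a,b} W D_{a,b}† · (D_{c,d} W D_{c,d}†)† )|^{2k} = (1/N²) Σ_{a,b=0}^{N−1} | Σ_{j,n=0}^{N−1} p_{j,n} ω^{an − bj} |^{2k}, where p_{j,n} = |w_{j,n}|² and w_{j,n} = N^{−1/2} tr(D_{j,n}† W). -/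
open Matrix Complex

noncomputable section

/-!
Up to a phase of modulus one, `D_{a,b}` is the Weyl operator `U_{a,b} = Z^a X^b`, and the
phase cancels in `D W D†`. The Weyl relation `Z X = ω X Z` gives
`U_{a,b}† U_{j,n} U_{a,b} = ω^{jb-an} U_{j,n}`, so conjugating `W` by `U_{a,b}` multiplies its
coefficient `tr(U_{j,n}† W)` by `ω^{an-jb}`.
Parseval's identity `Σ_{j,n} tr(U_{j,n}† A) conj tr(U_{j,n}† B) = N tr(A B†)` reduces to Parseval
for the discrete Fourier transform along each cyclic diagonal of `A` and `B`. Applied to the two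
conjugates of `W`, it gives `tr(A B†) = Σ_{j,n} p_{j,n} ω^{(a-c)n-(b-d)j}`, the symplectic Fourier
transform of `p` at `(a-c, b-d)`. That transform is `N`-periodic in both arguments, so summing
over `(c,d)` merely reproduces the sum over `(a,b)`, `N²` times.
-/

namespace Displacement

variable {N : ℕ}

theorem sum_fin_pow_of_pow_eq_one {K : Type*} [Field K] [DecidableEq K] {r : K}
    (hr : r ^ N = 1) : ∑ j : Fin N, r ^ (j : ℕ) = if r = 1 then (N : K) else 0 := by
  rw [Fin.sum_univ_eq_sum_range (r ^ ·)]
  split_ifs with h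
  · simp [h]
  · rw [geom_sum_eq h, hr, sub_self, zero_div]

theorem pow_mul_pow_of_mul_eq_smul {R A : Type*} [CommMonoid R] [Monoid A] [MulAction R A]
    [IsScalarTower R A A] [SMulCommClass R A A] {a b : A} {c : R} (h : a * b = c • (b * a))
    (m n : ℕ) : a ^ m * b ^ n = c ^ (m * n) • (b ^ n * a ^ m) := by
  have h₁ : ∀ n : ℕ, a * b ^ n = c ^ n • (b ^ n * a) := by
    intro n
    induction n with
    | zero => simp
    | succ n ih =>
      rw [pow_succ, ← mul_assoc, ih, smul_mul_assoc, mul_assoc, h, mul_smul_comm, smul_smul,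
        ← pow_succ, mul_assoc]
  induction m with
  | zero => simp
  | succ m ih =>
    rw [pow_succ', mul_assoc, ih, mul_smul_comm, ← mul_assoc, h₁, smul_mul_assoc, smul_smul,
      mul_assoc, ← pow_succ', ← pow_add, Nat.succ_mul, add_comm (m * n)]

theorem omegaN_ne_zero : omegaN N ≠ 0 := Complex.exp_ne_zero _

def weyl (N j n : ℕ) : Matrix (Fin N) (Fin N) ℂ := clockZ N ^ j * shiftX N ^ n

theorem clockZ_pow (j : ℕ) :
    clockZ N ^ j = diagonal fun x : Fin N => (omegaN N ^ (x : ℕ)) ^ j := by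
  rw [clockZ, diagonal_pow]
  rfl

theorem exists_dispD_eq_smul_weyl (a b : ℕ) :
    ∃ c : ℂ, ‖c‖ = 1 ∧ dispD N a b = c • weyl N a b := by
  refine ⟨_, ?_, by rw [dispD, zpow_natCast, zpow_natCast, weyl]⟩
  rw [show -(Real.pi * I * ((a : ℤ) : ℂ) * ((b : ℤ) : ℂ)) / N =
    ((-(Real.pi * a * b / N) : ℝ) : ℂ) * I by push_cast; ring, Complex.norm_exp_ofReal_mul_I]

theorem dispD_mul_mul_conjTranspose (a b : ℕ) (W : Matrix (Fin N) (Fin N) ℂ) :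
    dispD N a b * W * (dispD N a b)ᴴ = weyl N a b * W * (weyl N a b)ᴴ := by
  obtain ⟨c, hc, h⟩ := exists_dispD_eq_smul_weyl (N := N) a b
  rw [h, conjTranspose_smul, Matrix.smul_mul, Matrix.smul_mul, Matrix.mul_smul, smul_smul,
    Complex.star_def, Complex.mul_conj', hc]
  simp

theorem norm_trace_conjTranspose_dispD_mul (a b : ℕ) (M : Matrix (Fin N) (Fin N) ℂ) :
    ‖trace ((dispD N a b)ᴴ * M)‖ = ‖trace ((weyl N a b)ᴴ * M)‖ := by
  obtain ⟨c, hc, h⟩ := exists_dispD_eq_smul_weyl (N := N) a b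
  rw [h, conjTranspose_smul, Matrix.smul_mul, trace_smul, smul_eq_mul, norm_mul, norm_star, hc,
    one_mul]

def symplecticFourier (q : Fin N → Fin N → ℂ) (u v : ℤ) : ℂ :=
  ∑ j : Fin N, ∑ n : Fin N, q j n * omegaN N ^ (u * n - v * j)

variable [NeZero N]

theorem sum_sub_of_periodic {M : Type*} [AddCommMonoid M] {f : ℤ → M}
    (hf : Function.Periodic f N) (a : Fin N) :
    ∑ c : Fin N, f (((a : ℕ) : ℤ) - ((c : ℕ) : ℤ)) = ∑ c : Fin N, f ((c : ℕ) : ℤ) :=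
  Fintype.sum_equiv (Equiv.subLeft a) _ _ fun c => by
    rw [Equiv.subLeft_apply, Fin.intCast_val_sub_eq_sub_add_ite]
    split_ifs <;> simp [hf _]

theorem sum_sub_sum_sub_of_periodic {M : Type*} [AddCommMonoid M] {F : ℤ → ℤ → M}
    (hF₁ : ∀ v, Function.Periodic (F · v) N) (hF₂ : ∀ u, Function.Periodic (F u) N) :
    ∑ a : Fin N, ∑ b : Fin N, ∑ c : Fin N, ∑ d : Fin N,
        F (((a : ℕ) : ℤ) - ((c : ℕ) : ℤ)) (((b : ℕ) : ℤ) - ((d : ℕ) : ℤ)) =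
      N ^ 2 • ∑ c : Fin N, ∑ d : Fin N, F ((c : ℕ) : ℤ) ((d : ℕ) : ℤ) := by
  have hsub : ∀ a b : Fin N,
      ∑ c : Fin N, ∑ d : Fin N, F (((a : ℕ) : ℤ) - ((c : ℕ) : ℤ)) (((b : ℕ) : ℤ) - ((d : ℕ) : ℤ)) =
        ∑ c : Fin N, ∑ d : Fin N, F ((c : ℕ) : ℤ) ((d : ℕ) : ℤ) := fun a b => by
    simp only [sum_sub_of_periodic (hF₂ _) b]
    exact sum_sub_of_periodic (f := fun u => ∑ d : Fin N, F u ((d : ℕ) : ℤ))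
      (fun u => Finset.sum_congr rfl fun d _ => hF₁ _ u) a
  simp only [hsub, Finset.sum_const, Finset.card_univ, Fintype.card_fin, smul_smul, sq]

theorem isPrimitiveRoot_omegaN : IsPrimitiveRoot (omegaN N) N :=
  Complex.isPrimitiveRoot_exp N (NeZero.ne N)

theorem star_omegaN : star (omegaN N) = (omegaN N)⁻¹ :=
  (Complex.inv_eq_conj (isPrimitiveRoot_omegaN.norm'_eq_one (NeZero.ne N))).symm

theorem star_omegaN_zpow (m : ℤ) : star (omegaN N ^ m) = omegaN N ^ (-m) := by
  rw [star_zpow₀, star_omegaN, _root_.inv_zpow, _root_.zpow_neg]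

theorem omegaN_zpow_add_mul (m q : ℤ) : omegaN N ^ (m + N * q) = omegaN N ^ m := by
  rw [zpow_add₀ omegaN_ne_zero, _root_.zpow_mul, isPrimitiveRoot_omegaN.zpow_eq_one,
    _root_.one_zpow, mul_one]

theorem omegaN_pow_mod (m : ℕ) : omegaN N ^ (m % N) = omegaN N ^ m := by
  conv_rhs => rw [← Nat.mod_add_div m N, pow_add, pow_mul, isPrimitiveRoot_omegaN.pow_eq_one,
    one_pow, mul_one]

theorem omegaN_pow_val_add_one (x : Fin N) :
    omegaN N ^ ((x + 1 : Fin N) : ℕ) = omegaN N ^ (x : ℕ) * omegaN N := by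
  rw [Fin.val_add, Fin.val_one', Nat.add_mod_mod, omegaN_pow_mod, pow_succ]

theorem sum_star_omegaN_pow_pow_mul_pow (x x' : Fin N) :
    ∑ j : Fin N, star ((omegaN N ^ (x : ℕ)) ^ (j : ℕ)) * (omegaN N ^ (x' : ℕ)) ^ (j : ℕ) =
      if x = x' then (N : ℂ) else 0 := by
  have hζ := isPrimitiveRoot_omegaN (N := N)
  have hN : ∀ m : ℕ, (omegaN N ^ m) ^ N = 1 := fun m => by
    rw [← pow_mul, mul_comm, pow_mul, hζ.pow_eq_one, one_pow]
  have hr : (star (omegaN N ^ (x : ℕ)) * omegaN N ^ (x' : ℕ)) ^ N = 1 := by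
    rw [mul_pow, ← star_pow, hN, hN, star_one, one_mul]
  have hterm : ∀ j : ℕ, star ((omegaN N ^ (x : ℕ)) ^ j) * (omegaN N ^ (x' : ℕ)) ^ j =
      (star (omegaN N ^ (x : ℕ)) * omegaN N ^ (x' : ℕ)) ^ j := fun j => by
    rw [star_pow, mul_pow]
  simp only [hterm]
  rw [sum_fin_pow_of_pow_eq_one hr]
  refine if_congr ?_ rfl rfl
  rw [star_pow, star_omegaN, inv_pow, inv_mul_eq_one₀ (pow_ne_zero _ omegaN_ne_zero)]
  exact ⟨fun h => Fin.ext (hζ.pow_inj x.isLt x'.isLt h), fun h => h ▸ rfl⟩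

theorem symplecticFourier_periodic_left (q : Fin N → Fin N → ℂ) (v : ℤ) :
    Function.Periodic (symplecticFourier q · v) N := fun u =>
  Finset.sum_congr rfl fun j _ => Finset.sum_congr rfl fun n _ => by
    rw [show (u + N) * n - v * j = (u * n - v * j) + N * n by ring, omegaN_zpow_add_mul]

theorem symplecticFourier_periodic_right (q : Fin N → Fin N → ℂ) (u : ℤ) :
    Function.Periodic (symplecticFourier q u) N := fun v =>
  Finset.sum_congr rfl fun j _ => Finset.sum_congr rfl fun n _ => by
    rw [show u * n - (v + N) * j = (u * n - v * j) + N * (-j) by ring, omegaN_zpow_add_mul]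

theorem shiftX_apply (x y : Fin N) : shiftX N x y = if x = y + 1 then 1 else 0 := by
  simp only [shiftX, Matrix.of_apply, Fin.ext_iff, Fin.val_add, Fin.val_one', Nat.add_mod_mod]

open Fin.NatCast in
theorem shiftX_pow_apply (n : ℕ) (x y : Fin N) :
    (shiftX N ^ n) x y = if x = y + (n : Fin N) then 1 else 0 := by
  induction n generalizing x y with
  | zero => simp [Matrix.one_apply]
  | succ n ih =>
    simp [pow_succ, Matrix.mul_apply, shiftX_apply, ih, add_assoc, add_comm (1 : Fin N)]

theorem weyl_apply (j : ℕ) (n x y : Fin N) :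
    weyl N j n x y = if x = y + n then (omegaN N ^ (x : ℕ)) ^ j else 0 := by
  simp [weyl, clockZ_pow, shiftX_pow_apply, Fin.cast_val_eq_self]

theorem clockZ_mul_shiftX : clockZ N * shiftX N = omegaN N • (shiftX N * clockZ N) := by
  ext x y
  simp only [clockZ, diagonal_mul, mul_diagonal, shiftX_apply, Matrix.smul_apply, smul_eq_mul]
  split_ifs with h
  · rw [h, omegaN_pow_val_add_one]
    ring
  · simp

theorem clockZ_mem_unitaryGroup : clockZ N ∈ Matrix.unitaryGroup (Fin N) ℂ := by
  rw [Matrix.mem_unitaryGroup_iff', clockZ, star_eq_conjTranspose, diagonal_conjTranspose,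
    diagonal_mul_diagonal, ← diagonal_one]
  congr 1
  funext x
  rw [Pi.star_apply, star_pow, star_omegaN, inv_pow, inv_mul_cancel₀ (pow_ne_zero _ omegaN_ne_zero)]

theorem shiftX_mem_unitaryGroup : shiftX N ∈ Matrix.unitaryGroup (Fin N) ℂ := by
  rw [Matrix.mem_unitaryGroup_iff']
  ext x y
  simp [Matrix.mul_apply, shiftX_apply, Matrix.one_apply, eq_comm]

theorem conjTranspose_weyl_mul_weyl (j n : ℕ) : (weyl N j n)ᴴ * weyl N j n = 1 :=
  Matrix.mem_unitaryGroup_iff'.1 <|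
    mul_mem (pow_mem clockZ_mem_unitaryGroup j) (pow_mem shiftX_mem_unitaryGroup n)

theorem smul_weyl_mul_weyl (j n a b : ℕ) :
    omegaN N ^ (a * n) • (weyl N j n * weyl N a b) = clockZ N ^ (j + a) * shiftX N ^ (n + b) := by
  rw [pow_add, pow_add, show clockZ N ^ j * clockZ N ^ a * (shiftX N ^ n * shiftX N ^ b) =
      clockZ N ^ j * (clockZ N ^ a * shiftX N ^ n) * shiftX N ^ b by simp only [mul_assoc],
    pow_mul_pow_of_mul_eq_smul clockZ_mul_shiftX, mul_smul_comm, smul_mul_assoc]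
  simp only [weyl, mul_assoc]

theorem conjTranspose_weyl_mul_weyl_mul_weyl (j n a b : ℕ) :
    (weyl N a b)ᴴ * weyl N j n * weyl N a b = omegaN N ^ ((j : ℤ) * b - a * n) • weyl N j n := by
  have hcomm : omegaN N ^ (a * n) • (weyl N j n * weyl N a b) =
      omegaN N ^ (j * b) • (weyl N a b * weyl N j n) := by
    rw [smul_weyl_mul_weyl, smul_weyl_mul_weyl, add_comm j, add_comm n]
  have hc : omegaN N ^ (a * n) ≠ 0 := pow_ne_zero _ omegaN_ne_zero
  rw [← inv_smul_smul₀ hc ((weyl N a b)ᴴ * weyl N j n * weyl N a b), mul_assoc, ← mul_smul_comm,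
    hcomm, mul_smul_comm, ← mul_assoc, conjTranspose_weyl_mul_weyl, one_mul, smul_smul,
    zpow_sub₀ omegaN_ne_zero, div_eq_inv_mul]
  norm_cast

theorem trace_conjTranspose_weyl_mul_conj (j n a b : ℕ) (W : Matrix (Fin N) (Fin N) ℂ) :
    trace ((weyl N j n)ᴴ * (weyl N a b * W * (weyl N a b)ᴴ)) =
      omegaN N ^ ((a : ℤ) * n - j * b) * trace ((weyl N j n)ᴴ * W) := by
  calc trace ((weyl N j n)ᴴ * (weyl N a b * W * (weyl N a b)ᴴ))
      = trace (weyl N a b * W * ((weyl N a b)ᴴ * (weyl N j n)ᴴ)) := by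
        rw [trace_mul_comm]
        simp only [Matrix.mul_assoc]
    _ = trace ((weyl N a b)ᴴ * (weyl N j n)ᴴ * (weyl N a b * W)) := trace_mul_comm _ _
    _ = trace (((weyl N a b)ᴴ * weyl N j n * weyl N a b)ᴴ * W) := by
        simp only [conjTranspose_mul, conjTranspose_conjTranspose, Matrix.mul_assoc]
    _ = _ := by
        rw [conjTranspose_weyl_mul_weyl_mul_weyl, conjTranspose_smul, Matrix.smul_mul, trace_smul,
          smul_eq_mul, star_omegaN_zpow, neg_sub]

theorem trace_conjTranspose_weyl_mul (j : ℕ) (n : Fin N) (M : Matrix (Fin N) (Fin N) ℂ) :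
    trace ((weyl N j n)ᴴ * M) = ∑ x : Fin N, star ((omegaN N ^ (x : ℕ)) ^ j) * M x (x - n) := by
  have hcol : ∀ x y : Fin N, x = y + n ↔ y = x - n := fun x y => by
    rw [eq_sub_iff_add_eq, eq_comm]
  rw [trace_mul_comm]
  simp only [trace, diag, Matrix.mul_apply, conjTranspose_apply, weyl_apply, hcol,
    apply_ite star, star_zero, mul_ite, mul_zero, Finset.sum_ite_eq', Finset.mem_univ, if_true]
  exact Finset.sum_congr rfl fun x _ => mul_comm _ _

theorem sum_dft_mul_star_dft (u v : Fin N → ℂ) :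
    ∑ j : Fin N, (∑ x : Fin N, star ((omegaN N ^ (x : ℕ)) ^ (j : ℕ)) * u x) *
        star (∑ x : Fin N, star ((omegaN N ^ (x : ℕ)) ^ (j : ℕ)) * v x) =
      N * ∑ x, u x * star (v x) := by
  calc _ = ∑ x : Fin N, ∑ x' : Fin N, u x * star (v x') *
        ∑ j : Fin N, star ((omegaN N ^ (x : ℕ)) ^ (j : ℕ)) * (omegaN N ^ (x' : ℕ)) ^ (j : ℕ) := by
        simp only [star_sum, star_mul', star_star, Finset.sum_mul_sum]
        simp only [Finset.mul_sum]
        rw [Finset.sum_comm]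
        refine Finset.sum_congr rfl fun x _ => ?_
        rw [Finset.sum_comm]
        exact Finset.sum_congr rfl fun x' _ => Finset.sum_congr rfl fun j _ => by ring
    _ = N * ∑ x, u x * star (v x) := by
        simp only [sum_star_omegaN_pow_pow_mul_pow, mul_ite, mul_zero, Finset.sum_ite_eq,
          Finset.mem_univ, if_true]
        rw [← Finset.sum_mul, mul_comm]

theorem sum_trace_conjTranspose_weyl_mul_star (A B : Matrix (Fin N) (Fin N) ℂ) :
    ∑ j : Fin N, ∑ n : Fin N,
        trace ((weyl N j n)ᴴ * A) * star (trace ((weyl N j n)ᴴ * B)) = N * trace (A * Bᴴ) := by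
  simp only [trace_conjTranspose_weyl_mul]
  rw [Finset.sum_comm, Finset.sum_congr rfl fun n _ =>
    sum_dft_mul_star_dft (fun x => A x (x - n)) (fun x => B x (x - n)), ← Finset.mul_sum,
    Finset.sum_comm]
  congr 1
  refine Finset.sum_congr rfl fun x _ => ?_
  exact Fintype.sum_equiv (Equiv.subLeft x) _ _ fun n => rfl

theorem trace_conj_weyl_mul_conjTranspose_conj_weyl (a b c d : ℕ)
    (W : Matrix (Fin N) (Fin N) ℂ) :
    trace (weyl N a b * W * (weyl N a b)ᴴ * (weyl N c d * W * (weyl N c d)ᴴ)ᴴ) =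
      symplecticFourier (fun j n : Fin N => ‖trace ((weyl N j n)ᴴ * W)‖ ^ 2 / N)
        (a - c) (b - d) := by
  have hN : (N : ℂ) ≠ 0 := NeZero.ne _
  refine mul_left_cancel₀ hN ?_
  rw [← sum_trace_conjTranspose_weyl_mul_star, symplecticFourier, Finset.mul_sum]
  refine Finset.sum_congr rfl fun j _ => ?_
  rw [Finset.mul_sum]
  refine Finset.sum_congr rfl fun n _ => ?_
  rw [trace_conjTranspose_weyl_mul_conj, trace_conjTranspose_weyl_mul_conj, star_mul',
    star_omegaN_zpow, show ((a : ℤ) - c) * n - ((b : ℤ) - d) * j =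
      ((a : ℤ) * n - j * b) + -((c : ℤ) * n - j * d) by ring, zpow_add₀ omegaN_ne_zero,
    Complex.star_def, ← Complex.mul_conj']
  field_simp

end Displacement

open Displacement

theorem frame_potential_conjugation_family_general (N : ℕ) (hN : 0 < N)
    (W : Matrix (Fin N) (Fin N) ℂ) (k : ℕ)
    (w : Fin N → Fin N → ℂ)
    (hw : ∀ j n : Fin N, w j n = (1 / (Real.sqrt N : ℂ)) *
        Matrix.trace ((dispD N ((j : ℕ) : ℤ) ((n : ℕ) : ℤ))ᴴ * W))
    (p : Fin N → Fin N → ℝ)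
    (hp : ∀ j n : Fin N, p j n = Norm.norm (w j n) ^ 2) :
    (1 / (N : ℝ) ^ 4) *
      ∑ a : Fin N, ∑ b : Fin N, ∑ c : Fin N, ∑ d : Fin N,
        Norm.norm (Matrix.trace
          (dispD N ((a : ℕ) : ℤ) ((b : ℕ) : ℤ) * W * (dispD N ((a : ℕ) : ℤ) ((b : ℕ) : ℤ))ᴴ *
            (dispD N ((c : ℕ) : ℤ) ((d : ℕ) : ℤ) * W *
              (dispD N ((c : ℕ) : ℤ) ((d : ℕ) : ℤ))ᴴ)ᴴ)) ^ (2 * k)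
    =
    (1 / (N : ℝ) ^ 2) *
      ∑ a : Fin N, ∑ b : Fin N,
        Norm.norm (∑ j : Fin N, ∑ n : Fin N,
          (p j n : ℂ) *
            omegaN N ^ (((a : ℕ) : ℤ) * ((n : ℕ) : ℤ) - ((b : ℕ) : ℤ) * ((j : ℕ) : ℤ))) ^ (2 * k) := by
  have : NeZero N := ⟨hN.ne'⟩
  have hp_trace : (fun j n : Fin N => (p j n : ℂ)) =
      fun j n : Fin N => (‖trace ((weyl N j n)ᴴ * W)‖ ^ 2 / N : ℂ) := by
    funext j n
    rw [hp, hw, norm_mul, norm_trace_conjTranspose_dispD_mul, norm_div, norm_one, Complex.norm_real,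
      Real.norm_of_nonneg (Real.sqrt_nonneg _), mul_pow, div_pow, Real.sq_sqrt (Nat.cast_nonneg _)]
    push_cast
    ring
  have hterm : ∀ a b c d : Fin N,
      trace (dispD N a b * W * (dispD N a b)ᴴ * (dispD N c d * W * (dispD N c d)ᴴ)ᴴ) =
        symplecticFourier (fun j n => (p j n : ℂ)) (a - c) (b - d) := fun a b c d => by
    rw [dispD_mul_mul_conjTranspose, dispD_mul_mul_conjTranspose,
      trace_conj_weyl_mul_conjTranspose_conj_weyl, hp_trace]
  simp only [hterm]
  rw [sum_sub_sum_sub_of_periodic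
    (F := fun u v => ‖symplecticFourier (fun j n => (p j n : ℂ)) u v‖ ^ (2 * k))
    (fun v => (symplecticFourier_periodic_left _ v).comp fun z => ‖z‖ ^ (2 * k))
    (fun u => (symplecticFourier_periodic_right _ u).comp fun z => ‖z‖ ^ (2 * k)), nsmul_eq_mul]
  field_simp
  push_cast
  rfl

/-- The k-frame potential of the conjugation family `{D_{a,b} W D_{a,b}†}` reduces to a
Fourier-type sum over the coefficient magnitudes `p_{j,n} = |w_{j,n}|²`. -/
theorem frame_potential_conjugation_family (N : ℕ) (hN : 0 < N)
    (W : Matrix (Fin N) (Fin N) ℂ) (k : ℕ) (hk : 0 < k)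
    (w : Fin N → Fin N → ℂ)
    (hw : ∀ j n : Fin N, w j n = (1 / (Real.sqrt N : ℂ)) *
        Matrix.trace ((dispD N ((j : ℕ) : ℤ) ((n : ℕ) : ℤ))ᴴ * W))
    (p : Fin N → Fin N → ℝ)
    (hp : ∀ j n : Fin N, p j n = Norm.norm (w j n) ^ 2) :
    (1 / (N : ℝ) ^ 4) *
      ∑ a : Fin N, ∑ b : Fin N, ∑ c : Fin N, ∑ d : Fin N,
        Norm.norm (Matrix.trace
          (dispD N ((a : ℕ) : ℤ) ((b : ℕ) : ℤ) * W * (dispD N ((a : ℕ) : ℤ) ((b : ℕ) : ℤ))ᴴ *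
            (dispD N ((c : ℕ) : ℤ) ((d : ℕ) : ℤ) * W *
              (dispD N ((c : ℕ) : ℤ) ((d : ℕ) : ℤ))ᴴ)ᴴ)) ^ (2 * k)
    =
    (1 / (N : ℝ) ^ 2) *
      ∑ a : Fin N, ∑ b : Fin N,
        Norm.norm (∑ j : Fin N, ∑ n : Fin N,
          (p j n : ℂ) *
            omegaN N ^ (((a : ℕ) : ℤ) * ((n : ℕ) : ℤ) - ((b : ℕ) : ℤ) * ((j : ℕ) : ℤ))) ^ (2 * k) :=
  frame_potential_conjugation_family_general N hN W k w hw p hp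
end
end
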